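/- arXiv:1711.08887 — 4 statements merged into one kernel-verified Lean document; each statement's English description precedes it below -/
import Mathlib

section
/- For every n ≥ 2, the distinguishing number of the friendship graph F_n equals ⌈(1 + √(8n+1))/2⌉. -/
/-- A labeling `φ` of the vertices of `G` is distinguishing if the only
automorphism of `G` preserving all labels is the identity. -/
def IsDistinguishing {V α : Type*} (G : SimpleGraph V) (φ : V → α) : Prop :=
  ∀ σ : G ≃g G, (∀ v, φ (σ v) = φ v) → ∀ v, σ v = v

/-- The distinguishing number `D(G)`. -/
noncomputable def distinguishingNumber {V : Type*} (G : SimpleGraph V) : ℕ :=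
  sInf {r : ℕ | ∃ φ : V → Fin r, IsDistinguishing G φ}

/-- The list distinguishing number `D_l(G)`. -/
noncomputable def listDistinguishingNumber {V : Type*} (G : SimpleGraph V) : ℕ :=
  sInf {k : ℕ | ∀ L : V → Finset ℕ, (∀ v, (L v).card = k) →
    ∃ φ : V → ℕ, (∀ v, φ v ∈ L v) ∧ IsDistinguishing G φ}

/-- The friendship graph `F_n`: `n` triangles sharing the common central
vertex `none`; the `i`-th triangle has non-central vertices `some (i, 0)`
and `some (i, 1)`. -/
def friendshipGraph (n : ℕ) : SimpleGraph (Option (Fin n × Fin 2)) :=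
  SimpleGraph.fromRel (fun u v =>
    u = none ∨ ∃ p q : Fin n × Fin 2, u = some p ∧ v = some q ∧ p.1 = q.1)

section aux
variable {n : ℕ}

lemma fg_adj_none_some (p : Fin n × Fin 2) :
    (friendshipGraph n).Adj none (some p) := by
  simp [friendshipGraph, SimpleGraph.fromRel_adj]

lemma fg_adj_some_some {p q : Fin n × Fin 2} :
    (friendshipGraph n).Adj (some p) (some q) ↔ p ≠ q ∧ p.1 = q.1 := by
  simp only [friendshipGraph, SimpleGraph.fromRel_adj]
  constructor
  · rintro ⟨hne, h⟩
    refine ⟨fun h' => hne (by rw [h']), ?_⟩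
    rcases h with (h | ⟨a, b, ha, hb, hab⟩) | (h | ⟨a, b, ha, hb, hab⟩)
    · exact absurd h (by simp)
    · obtain rfl : p = a := Option.some.inj ha
      obtain rfl : q = b := Option.some.inj hb
      exact hab
    · exact absurd h (by simp)
    · obtain rfl : q = a := Option.some.inj ha
      obtain rfl : p = b := Option.some.inj hb
      exact hab.symm
  · rintro ⟨hne, h⟩
    exact ⟨by simpa using hne, Or.inl (Or.inr ⟨p, q, rfl, rfl, h⟩)⟩

/-- Build an automorphism of the friendship graph from a permutation of triangles
and permutations within each triangle. -/
def fgAut (π : Equiv.Perm (Fin n)) (s : Fin n → Equiv.Perm (Fin 2)) :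
    friendshipGraph n ≃g friendshipGraph n where
  toEquiv := Equiv.optionCongr (Equiv.prodShear π s)
  map_rel_iff' := by
    rintro (_ | p) (_ | q)
    · simp [friendshipGraph, SimpleGraph.fromRel_adj]
    · simpa using iff_of_true (fg_adj_none_some _) (fg_adj_none_some _)
    · simpa using iff_of_true ((fg_adj_none_some _).symm) ((fg_adj_none_some _).symm)
    · show (friendshipGraph n).Adj (some (π p.1, s p.1 p.2)) (some (π q.1, s q.1 q.2)) ↔ _
      rw [fg_adj_some_some, fg_adj_some_some]
      constructor
      · rintro ⟨hne, h1⟩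
        have h1' : p.1 = q.1 := π.injective h1
        refine ⟨fun h => hne (by rw [h]), h1'⟩
      · rintro ⟨hne, h1⟩
        refine ⟨?_, by rw [h1]⟩
        intro h
        apply hne
        have h2 := congrArg Prod.snd h
        simp only at h2
        rw [h1] at h2
        have := (s q.1).injective h2
        exact Prod.ext h1 this

@[simp] lemma fgAut_none (π : Equiv.Perm (Fin n)) (s : Fin n → Equiv.Perm (Fin 2)) :
    fgAut π s none = none := rfl

@[simp] lemma fgAut_some (π : Equiv.Perm (Fin n)) (s : Fin n → Equiv.Perm (Fin 2))
    (p : Fin n × Fin 2) : fgAut π s (some p) = some (π p.1, s p.1 p.2) := rfl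

lemma center_fixed (hn : 2 ≤ n) (σ : friendshipGraph n ≃g friendshipGraph n) :
    σ none = none := by
  by_contra h
  obtain ⟨p, hp⟩ : ∃ p, σ none = some p := by
    cases hσ : σ none with
    | none => exact absurd hσ h
    | some p => exact ⟨p, rfl⟩
  have hn1 : 1 < n := hn
  obtain ⟨j, hj⟩ : ∃ j : Fin n, j ≠ p.1 := by
    rcases Decidable.eq_or_ne (⟨0, by omega⟩ : Fin n) p.1 with h0 | h0
    · exact ⟨⟨1, by omega⟩, by rw [← h0]; simp [Fin.ext_iff]⟩
    · exact ⟨_, h0⟩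
  have hσv : σ (σ.symm (some (j, 0))) = some (j, 0) := σ.apply_symm_apply _
  obtain ⟨w, hw⟩ : ∃ w, σ.symm (some (j, 0)) = some w := by
    cases hv : σ.symm (some (j, 0)) with
    | none =>
      rw [hv, hp] at hσv
      exact absurd (congrArg Prod.fst (Option.some.inj hσv)).symm hj
    | some w => exact ⟨w, rfl⟩
  rw [hw] at hσv
  have hadj : (friendshipGraph n).Adj none (some w) := fg_adj_none_some w
  have := σ.map_rel_iff.mpr hadj
  rw [hp, hσv] at this
  exact hj ((fg_adj_some_some.mp this).2).symm

lemma sigma_some (σ : friendshipGraph n ≃g friendshipGraph n) (hc : σ none = none)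
    (p : Fin n × Fin 2) : ∃ q, σ (some p) = some q := by
  cases hσ : σ (some p) with
  | none =>
    exfalso
    have : (some p : Option (Fin n × Fin 2)) = none := σ.injective (by rw [hσ, hc])
    simp at this
  | some q => exact ⟨q, rfl⟩

end aux

section char
variable {n : ℕ} {α : Type*}

lemma two_cases (x : Fin 2) : x = 0 ∨ x = 1 := by omega

lemma distinct_of_distinguishing (φ : Option (Fin n × Fin 2) → α)
    (hφ : IsDistinguishing (friendshipGraph n) φ) (i : Fin n) :
    φ (some (i, 0)) ≠ φ (some (i, 1)) := by
  intro h
  set σ := fgAut (1 : Equiv.Perm (Fin n)) (fun j => if j = i then Equiv.swap 0 1 else 1) with hσdef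
  have hpres : ∀ v, φ (σ v) = φ v := by
    rintro (_ | ⟨k, t⟩)
    · rfl
    · rw [hσdef, fgAut_some]
      simp only [Equiv.Perm.one_apply]
      rcases Decidable.eq_or_ne k i with rfl | hk
      · rw [if_pos rfl]
        rcases two_cases t with rfl | rfl
        · rw [Equiv.swap_apply_left]; exact h.symm
        · rw [Equiv.swap_apply_right]; exact h
      · simp [if_neg hk]
  have := hφ σ hpres (some (i, 0))
  rw [hσdef, fgAut_some, if_pos rfl, Equiv.swap_apply_left] at this
  simp only [Equiv.Perm.one_apply] at this
  have := Option.some.inj this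
  exact one_ne_zero (congrArg Prod.snd this)

lemma pairs_inj_of_distinguishing (φ : Option (Fin n × Fin 2) → α)
    (hφ : IsDistinguishing (friendshipGraph n) φ) :
    Function.Injective
      (fun i : Fin n => s(φ (some (i, 0)), φ (some (i, 1)))) := by
  intro i j hij
  by_contra hne
  simp only [Sym2.eq_iff] at hij
  rcases hij with ⟨h0, h1⟩ | ⟨h0, h1⟩
  · -- aligned swap of triangles i and j
    set σ := fgAut (Equiv.swap i j) (fun _ => 1) with hσdef
    have hpres : ∀ v, φ (σ v) = φ v := by
      rintro (_ | ⟨k, t⟩)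
      · rfl
      · rw [hσdef, fgAut_some]
        simp only [Equiv.Perm.one_apply]
        rcases Decidable.eq_or_ne k i with rfl | hki
        · rw [Equiv.swap_apply_left]
          rcases two_cases t with rfl | rfl
          · exact h0.symm
          · exact h1.symm
        · rcases Decidable.eq_or_ne k j with rfl | hkj
          · rw [Equiv.swap_apply_right]
            rcases two_cases t with rfl | rfl
            · exact h0
            · exact h1
          · rw [Equiv.swap_apply_of_ne_of_ne hki hkj]
    have := hφ σ hpres (some (i, 0))
    rw [hσdef, fgAut_some] at this
    simp only [Equiv.Perm.one_apply, Equiv.swap_apply_left] at this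
    exact hne (congrArg Prod.fst (Option.some.inj this)).symm
  · -- crossed swap of triangles i and j
    set σ := fgAut (Equiv.swap i j)
      (fun k => if k = i ∨ k = j then Equiv.swap 0 1 else 1) with hσdef
    have hpres : ∀ v, φ (σ v) = φ v := by
      rintro (_ | ⟨k, t⟩)
      · rfl
      · rw [hσdef, fgAut_some]
        rcases Decidable.eq_or_ne k i with rfl | hki
        · rw [if_pos (Or.inl rfl), Equiv.swap_apply_left]
          rcases two_cases t with rfl | rfl
          · rw [Equiv.swap_apply_left]; exact h0.symm
          · rw [Equiv.swap_apply_right]; exact h1.symm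
        · rcases Decidable.eq_or_ne k j with rfl | hkj
          · rw [if_pos (Or.inr rfl), Equiv.swap_apply_right]
            rcases two_cases t with rfl | rfl
            · rw [Equiv.swap_apply_left]; exact h1
            · rw [Equiv.swap_apply_right]; exact h0
          · simp [Equiv.swap_apply_of_ne_of_ne hki hkj, if_neg, hki, hkj]
    have := hφ σ hpres (some (i, 0))
    rw [hσdef, fgAut_some, if_pos (Or.inl rfl), Equiv.swap_apply_left] at this
    exact hne (congrArg Prod.fst (Option.some.inj this)).symm

lemma distinguishing_of (hn : 2 ≤ n) (φ : Option (Fin n × Fin 2) → α)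
    (hd : ∀ i : Fin n, φ (some (i, 0)) ≠ φ (some (i, 1)))
    (hinj : Function.Injective
      (fun i : Fin n => s(φ (some (i, 0)), φ (some (i, 1))))) :
    IsDistinguishing (friendshipGraph n) φ := by
  intro σ hlab
  have hc : σ none = none := center_fixed hn σ
  have key : ∀ i : Fin n, σ (some (i, 0)) = some (i, 0) ∧ σ (some (i, 1)) = some (i, 1) := by
    intro i
    obtain ⟨⟨j0, t0⟩, hq0⟩ := sigma_some σ hc (i, 0)
    obtain ⟨⟨j1, t1⟩, hq1⟩ := sigma_some σ hc (i, 1)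
    have hadj : (friendshipGraph n).Adj (some (i, 0)) (some (i, 1)) :=
      fg_adj_some_some.mpr ⟨by simp, rfl⟩
    have hadj2 := σ.map_rel_iff.mpr hadj
    rw [hq0, hq1, fg_adj_some_some] at hadj2
    obtain ⟨hne, hfst⟩ := hadj2
    obtain rfl : j0 = j1 := hfst
    have htne : t0 ≠ t1 := fun h => hne (by rw [h])
    have hl0 : φ (some (j0, t0)) = φ (some (i, 0)) := by rw [← hq0]; exact hlab _
    have hl1 : φ (some (j0, t1)) = φ (some (i, 1)) := by rw [← hq1]; exact hlab _
    rcases two_cases t0 with rfl | rfl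
    · obtain rfl : t1 = 1 := by
        rcases two_cases t1 with rfl | rfl
        · exact absurd rfl htne
        · rfl
      have : j0 = i := hinj (by simp only [hl0, hl1])
      subst this
      exact ⟨hq0, hq1⟩
    · obtain rfl : t1 = 0 := by
        rcases two_cases t1 with rfl | rfl
        · rfl
        · exact absurd rfl htne
      have hj0i : j0 = i := by
        apply hinj
        show s(φ (some (j0, 0)), φ (some (j0, 1))) = _
        rw [hl0, hl1]
        exact Sym2.eq_swap
      subst hj0i
      exact absurd hl0.symm (hd j0)
  rintro (_ | ⟨i, t⟩)
  · exact hc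
  · rcases two_cases t with rfl | rfl
    · exact (key i).1
    · exact (key i).2

end char

section count

lemma exists_pair {r : ℕ} (z : Sym2 (Fin r)) (hz : ¬ z.IsDiag) :
    ∃ a b : Fin r, a ≠ b ∧ z = s(a, b) := by
  induction z using Sym2.ind with
  | _ a b => exact ⟨a, b, fun h => hz (Sym2.mk_isDiag_iff.mpr h), rfl⟩

lemma mem_iff {n : ℕ} (hn : 2 ≤ n) (r : ℕ) :
    (∃ φ : Option (Fin n × Fin 2) → Fin r, IsDistinguishing (friendshipGraph n) φ) ↔
    n ≤ r.choose 2 := by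
  constructor
  · rintro ⟨φ, hφ⟩
    have hinj := pairs_inj_of_distinguishing φ hφ
    have hd := distinct_of_distinguishing φ hφ
    let f : Fin n → {z : Sym2 (Fin r) // ¬ z.IsDiag} := fun i =>
      ⟨s(φ (some (i, 0)), φ (some (i, 1))), fun h => hd i (Sym2.mk_isDiag_iff.mp h)⟩
    have hfinj : Function.Injective f := fun i j h => hinj (congrArg Subtype.val h)
    calc n = Fintype.card (Fin n) := (Fintype.card_fin n).symm
    _ ≤ Fintype.card {z : Sym2 (Fin r) // ¬ z.IsDiag} := Fintype.card_le_of_injective f hfinj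
    _ = (Fintype.card (Fin r)).choose 2 := Sym2.card_subtype_not_diag
    _ = r.choose 2 := by rw [Fintype.card_fin]
  · intro h
    have hcard : Fintype.card (Fin n) ≤ Fintype.card {z : Sym2 (Fin r) // ¬ z.IsDiag} := by
      rw [Fintype.card_fin, Sym2.card_subtype_not_diag, Fintype.card_fin]; exact h
    obtain ⟨e⟩ := Function.Embedding.nonempty_of_card_le hcard
    choose a b hab hz using fun i : Fin n => exists_pair (e i).1 (e i).2
    have hr : 0 < r := by
      rcases Nat.eq_zero_or_pos r with rfl | h'
      · simp [Nat.choose] at h; omega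
      · exact h'
    refine ⟨fun v => Option.rec ⟨0, hr⟩ (fun p => ![a p.1, b p.1] p.2) v, ?_⟩
    apply distinguishing_of hn
    · intro i
      simpa using hab i
    · intro i j hij
      simp only [Matrix.cons_val_zero, Matrix.cons_val_one, Matrix.head_cons] at hij
      rw [← hz i, ← hz j] at hij
      exact e.injective (Subtype.ext hij)

end count

lemma ceil_le_iff {n r : ℕ} (hn : 2 ≤ n) :
    ⌈(1 + Real.sqrt (8 * n + 1)) / 2⌉₊ ≤ r ↔ n ≤ r.choose 2 := by
  rw [Nat.ceil_le, Nat.choose_two_right]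
  have hsq : (0:ℝ) ≤ 8 * n + 1 := by positivity
  constructor
  · intro h
    have h1 : Real.sqrt (8 * n + 1) ≤ 2 * r - 1 := by linarith
    have h2 : (8 * n + 1 : ℝ) ≤ (2 * r - 1) ^ 2 := by
      nlinarith [Real.sq_sqrt hsq, Real.sqrt_nonneg (8 * (n:ℝ) + 1)]
    have h5 : n * 2 + r ≤ r * r := by
      have : (n : ℝ) * 2 + r ≤ r * r := by nlinarith
      exact_mod_cast this
    have h4 : n * 2 ≤ r * (r - 1) := by
      have hrr : r * (r - 1) + r = r * r := by
        cases r with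
        | zero => simp
        | succ k => simp only [Nat.succ_sub_one]; ring
      omega
    exact (Nat.le_div_iff_mul_le two_pos).mpr h4
  · intro h
    have h4 : n * 2 ≤ r * (r - 1) := (Nat.le_div_iff_mul_le two_pos).mp h
    have hrr : r * (r - 1) + r = r * r := by
      cases r with
      | zero => simp
      | succ k => simp only [Nat.succ_sub_one]; ring
    have h5 : n * 2 + r ≤ r * r := by omega
    have hr1 : 1 ≤ r := by
      by_contra h'
      push_neg at h'
      interval_cases r
      · simp at h5; omega
    have h5' : (n : ℝ) * 2 + r ≤ r * r := by exact_mod_cast h5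
    have hr1' : (1 : ℝ) ≤ r := by exact_mod_cast hr1
    have h2 : (8 * n + 1 : ℝ) ≤ (2 * r - 1) ^ 2 := by nlinarith
    have h1 : Real.sqrt (8 * n + 1) ≤ 2 * r - 1 := by
      calc Real.sqrt (8 * n + 1) ≤ Real.sqrt ((2 * r - 1) ^ 2) := Real.sqrt_le_sqrt h2
      _ = 2 * r - 1 := Real.sqrt_sq (by linarith)
    linarith


/-- For every `n ≥ 2`, `D(F_n) = ⌈(1 + √(8n+1))/2⌉`. -/
theorem stmt_4 (n : ℕ) (hn : 2 ≤ n) :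
    distinguishingNumber (friendshipGraph n) =
      ⌈(1 + Real.sqrt (8 * n + 1)) / 2⌉₊ := by
  have hc : ⌈(1 + Real.sqrt (8 * n + 1)) / 2⌉₊ ∈
      {r : ℕ | ∃ φ : Option (Fin n × Fin 2) → Fin r, IsDistinguishing (friendshipGraph n) φ} :=
    (mem_iff hn _).mpr ((ceil_le_iff hn).mp le_rfl)
  refine le_antisymm (Nat.sInf_le hc) (le_csInf ⟨_, hc⟩ ?_)
  rintro r hr
  exact (ceil_le_iff hn).mpr ((mem_iff hn r).mp hr)
end

section
/- For every n ≥ 2, the distinguishing number of the book graph B_n = K_{1,n} □ P_2 equals ⌈√n⌉. -/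
/-- The star `K_{1,n}` with center `none` and leaves `some i`. -/
def starGraph (n : ℕ) : SimpleGraph (Option (Fin n)) :=
  SimpleGraph.fromRel (fun u _ => u = none)

/-- The book graph `B_n = K_{1,n} □ P_2`; the hinge vertices are
`(none, 0)` and `(none, 1)`. -/
def bookGraph (n : ℕ) : SimpleGraph ((Option (Fin n)) × Fin 2) :=
  (starGraph n).boxProd (⊤ : SimpleGraph (Fin 2))

lemma book_adj {n : ℕ} (x y : Option (Fin n)) (a b : Fin 2) :
    (bookGraph n).Adj (x, a) (y, b) ↔
      (x ≠ y ∧ (x = none ∨ y = none) ∧ a = b) ∨ (a ≠ b ∧ x = y) := by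
  simp [bookGraph, starGraph, SimpleGraph.boxProd_adj, SimpleGraph.fromRel_adj]
  tauto

/-- `v` has at least three distinct neighbors. -/
def HasThree {n : ℕ} (v : Option (Fin n) × Fin 2) : Prop :=
  ∃ a b c, a ≠ b ∧ a ≠ c ∧ b ≠ c ∧ (bookGraph n).Adj a v ∧ (bookGraph n).Adj b v ∧
    (bookGraph n).Adj c v

lemma hasThree_hinge {n : ℕ} (hn : 2 ≤ n) (j : Fin 2) : HasThree (n := n) (none, j) := by
  refine ⟨(some ⟨0, by omega⟩, j), (some ⟨1, by omega⟩, j), (none, j + 1), ?_, ?_, ?_, ?_, ?_, ?_⟩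
  · simp [Prod.ext_iff, Fin.ext_iff]
  · simp
  · simp
  · rw [book_adj]; simp
  · rw [book_adj]; simp
  · rw [book_adj]; right; exact ⟨by fin_cases j <;> decide, rfl⟩

lemma not_hasThree_leaf {n : ℕ} (i : Fin n) (k : Fin 2) :
    ¬ HasThree (n := n) (some i, k) := by
  rintro ⟨⟨xa, aa⟩, ⟨xb, ab⟩, ⟨xc, ac⟩, hab, hac, hbc, ha, hb, hc⟩
  rw [book_adj] at ha hb hc
  have key : ∀ (x : Option (Fin n)) (a : Fin 2),
      ((x ≠ some i ∧ (x = none ∨ some i = none) ∧ a = k) ∨ (a ≠ k ∧ x = some i)) →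
      (x = none ∧ a = k) ∨ (x = some i ∧ a ≠ k) := by
    rintro x a (⟨h1, h2 | h2, h3⟩ | ⟨h1, h2⟩) <;> simp_all
  have f2 : ∀ (k a b : Fin 2), a ≠ k → b ≠ k → a = b := by decide
  rcases key _ _ ha with ⟨rfl, rfl⟩ | ⟨rfl, ha'⟩ <;>
    rcases key _ _ hb with ⟨rfl, rfl⟩ | ⟨rfl, hb'⟩ <;>
    rcases key _ _ hc with ⟨rfl, rfl⟩ | ⟨rfl, hc'⟩ <;>
    simp_all [Prod.ext_iff] <;>
    omega

lemma hasThree_map {n : ℕ} (σ : bookGraph n ≃g bookGraph n) (v : Option (Fin n) × Fin 2)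
    (h : HasThree v) : HasThree (σ v) := by
  obtain ⟨a, b, c, hab, hac, hbc, ha, hb, hc⟩ := h
  exact ⟨σ a, σ b, σ c, fun h => hab (σ.toEquiv.injective h),
    fun h => hac (σ.toEquiv.injective h), fun h => hbc (σ.toEquiv.injective h),
    σ.map_rel_iff.mpr ha, σ.map_rel_iff.mpr hb, σ.map_rel_iff.mpr hc⟩

noncomputable def enc {n r : ℕ} (hnr : n ≤ r * r) : Fin n → Fin r × Fin r :=
  fun i => finProdFinEquiv.symm (Fin.castLE hnr i)

lemma enc_inj {n r : ℕ} (hnr : n ≤ r * r) : Function.Injective (enc hnr) :=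
  finProdFinEquiv.symm.injective.comp (Fin.castLE_injective hnr)

noncomputable def lab {n r : ℕ} (hr2 : 2 ≤ r) (hnr : n ≤ r * r) :
    Option (Fin n) × Fin 2 → Fin r :=
  fun v => match v with
  | (none, k) => ⟨k.val, by omega⟩
  | (some i, k) => if k = 0 then (enc hnr i).1 else (enc hnr i).2

lemma lab_distinguishing {n r : ℕ} (hr2 : 2 ≤ r) (hnr : n ≤ r * r) (hn : 2 ≤ n) :
    IsDistinguishing (bookGraph n) (lab hr2 hnr) := by
  intro σ hφ
  have hingefix : ∀ j : Fin 2, σ (none, j) = (none, j) := by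
    intro j
    have h3 := hasThree_map σ _ (hasThree_hinge hn j)
    rcases h : σ (none, j) with ⟨_ | i, b⟩
    · have hl := hφ (none, j)
      rw [h] at hl
      have hb : b = j := by simpa [lab, Fin.ext_iff] using hl
      rw [hb]
    · rw [h] at h3
      exact absurd h3 (not_hasThree_leaf i b)
  have leaffix : ∀ (i : Fin n) (k : Fin 2), σ (some i, k) = (some i, k) := by
    intro i k
    have hadj : (bookGraph n).Adj (σ (some i, k)) (none, k) := by
      rw [← hingefix k]
      exact σ.map_rel_iff.mpr (by rw [book_adj]; simp)
    rcases h : σ (some i, k) with ⟨_ | j, b⟩ <;> rw [h] at hadj <;> rw [book_adj] at hadj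
    · have : σ (some i, k) = σ (none, b) := by rw [h, hingefix b]
      have := σ.toEquiv.injective this
      simp at this
    · have hb : b = k := by
        rcases hadj with ⟨_, h2 | h2, h3⟩ | ⟨_, h2⟩
        · exact absurd h2 (by simp)
        · exact h3
        · exact absurd h2 (by simp)
      subst hb
      rcases h' : σ (some i, b + 1) with ⟨_ | j', b'⟩
      · have : σ (some i, b + 1) = σ (none, b') := by rw [h', hingefix b']
        have := σ.toEquiv.injective this
        simp at this
      · have hadj2 : (bookGraph n).Adj (σ (some i, b)) (σ (some i, b + 1)) :=
          σ.map_rel_iff.mpr (by rw [book_adj]; exact Or.inr ⟨by fin_cases b <;> decide, rfl⟩)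
        rw [h, h'] at hadj2; rw [book_adj] at hadj2
        have hjj : j' = j := by
          rcases hadj2 with ⟨_, h2 | h2, _⟩ | ⟨h1, h2⟩
          · exact absurd h2 (by simp)
          · exact absurd h2 (by simp)
          · simpa using h2.symm
        subst hjj
        have l1 := hφ (some i, b); rw [h] at l1
        have l2 := hφ (some i, b + 1); rw [h'] at l2
        have hb' : b' = b + 1 := by
          rcases hadj2 with ⟨h1, _, _⟩ | ⟨h1, h2⟩
          · exact absurd rfl h1
          · revert h1; fin_cases b <;> fin_cases b' <;> decide
        subst hb'
        have hji : j' = i := by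
          apply enc_inj hnr
          fin_cases b
          · exact Prod.ext (by simpa [lab] using l1) (by simpa [lab] using l2)
          · exact Prod.ext (by simpa [lab] using l2) (by simpa [lab] using l1)
        rw [hji]
  intro v
  rcases v with ⟨_ | i, k⟩
  · exact hingefix k
  · exact leaffix i k

/-- swapping two pages is an automorphism -/
def pageSwap {n : ℕ} (i j : Fin n) : bookGraph n ≃g bookGraph n where
  toEquiv := Equiv.prodCongr (Equiv.optionCongr (Equiv.swap i j)) (Equiv.refl (Fin 2))
  map_rel_iff' := by
    rintro ⟨x, a⟩ ⟨y, b⟩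
    simp only [Equiv.prodCongr_apply, Prod.map, Equiv.optionCongr_apply, Equiv.refl_apply]
    rw [book_adj, book_adj]
    have hinj : ∀ u v : Option (Fin n),
        Option.map (Equiv.swap i j) u = Option.map (Equiv.swap i j) v ↔ u = v := fun u v =>
      (Option.map_injective (Equiv.swap i j).injective).eq_iff
    have hnone : ∀ u : Option (Fin n),
        Option.map (Equiv.swap i j) u = none ↔ u = none := fun u => Option.map_eq_none_iff
    simp only [ne_eq, hinj, hnone]

lemma lower_bound {n r : ℕ} (hrn : r * r < n) (φ : (Option (Fin n)) × Fin 2 → Fin r) :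
    ¬ IsDistinguishing (bookGraph n) φ := by
  intro hd
  have hcard : Fintype.card (Fin r × Fin r) < Fintype.card (Fin n) := by
    simpa using hrn
  obtain ⟨i, j, hij, hg⟩ := Fintype.exists_ne_map_eq_of_card_lt
    (fun i : Fin n => (φ (some i, 0), φ (some i, 1))) hcard
  have hpres : ∀ v, φ ((pageSwap i j) v) = φ v := by
    rintro ⟨_ | l, k⟩
    · rfl
    · show φ (some (Equiv.swap i j l), k) = φ (some l, k)
      rcases eq_or_ne l i with rfl | hli
      · rw [Equiv.swap_apply_left]
        fin_cases k
        · exact (congrArg Prod.fst hg).symm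
        · exact (congrArg Prod.snd hg).symm
      · rcases eq_or_ne l j with rfl | hlj
        · rw [Equiv.swap_apply_right]
          fin_cases k
          · exact congrArg Prod.fst hg
          · exact congrArg Prod.snd hg
        · rw [Equiv.swap_apply_of_ne_of_ne hli hlj]
  have := hd (pageSwap i j) hpres (some i, 0)
  have : some (Equiv.swap i j i) = some i := congrArg Prod.fst this
  simp [Equiv.swap_apply_left] at this
  exact hij this.symm

/-- For every `n ≥ 2`, `D(B_n) = ⌈√n⌉`. -/
theorem stmt_6 (n : ℕ) (hn : 2 ≤ n) :
    distinguishingNumber (bookGraph n) = ⌈Real.sqrt n⌉₊ := by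
  set r := ⌈Real.sqrt n⌉₊ with hr
  have hn0 : (0:ℝ) ≤ (n:ℝ) := by positivity
  have hsqsq : Real.sqrt n * Real.sqrt n = (n:ℝ) := Real.mul_self_sqrt hn0
  have hr2 : 2 ≤ r := by
    have h1 : (1:ℝ) < Real.sqrt n := by
      nlinarith [Real.sqrt_nonneg (n:ℝ), show (2:ℝ) ≤ (n:ℝ) by exact_mod_cast hn]
    have : 1 < r := Nat.lt_ceil.mpr (by exact_mod_cast h1)
    omega
  have hnr : n ≤ r * r := by
    have hle : Real.sqrt n ≤ (r:ℝ) := Nat.le_ceil _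
    have : (n:ℝ) ≤ (r:ℝ) * (r:ℝ) := by nlinarith [Real.sqrt_nonneg (n:ℝ)]
    exact_mod_cast this
  apply le_antisymm
  · exact Nat.sInf_le ⟨lab hr2 hnr, lab_distinguishing hr2 hnr hn⟩
  · refine le_csInf ⟨r, lab hr2 hnr, lab_distinguishing hr2 hnr hn⟩ ?_
    rintro m ⟨φ, hφ⟩
    by_contra hlt
    push_neg at hlt
    have hm : (m:ℝ) < Real.sqrt n := Nat.lt_ceil.mp hlt
    have hmm : m * m < n := by
      have : (m:ℝ) * (m:ℝ) < (n:ℝ) := by nlinarith [Real.sqrt_nonneg (n:ℝ)]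
      exact_mod_cast this
    exact lower_bound hmm φ hφ
end

section
/- Let G be a graph with n vertices and distinguishing number D(G) = d. Then D_l(G) = D(G) = d if and only if for every m ≥ d, the number of sequences of d-element subsets of {1,…,m} that arise as (m,d)-related sequences to some distinguishing labeling of G with labels in {1,…,m} is at least C(m,d)^n (equivalently, every such sequence is a related sequence to some distinguishing labeling). -/
/-- `D_l(G) = D(G) = d` iff for every `m ≥ d` every sequence of `d`-element
subsets of `{1,…,m}` indexed by the vertices is an `(m,d)`-related sequence to
some distinguishing labeling of `G` with labels in `{1,…,m}`. -/
theorem stmt_14 {V : Type*} [Fintype V] (G : SimpleGraph V) (d : ℕ)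
    (hD : distinguishingNumber G = d) :
    listDistinguishingNumber G = d ↔
      ∀ m, d ≤ m → ∀ L : V → Finset ℕ,
        (∀ v, (L v).card = d ∧ L v ⊆ Finset.Icc 1 m) →
        ∃ C : V → ℕ, (∀ v, C v ∈ Finset.Icc 1 m) ∧ IsDistinguishing G C ∧
          ∀ v, C v ∈ L v := by
  classical
  set S : Set ℕ := {k : ℕ | ∀ L : V → Finset ℕ, (∀ v, (L v).card = k) →
    ∃ φ : V → ℕ, (∀ v, φ v ∈ L v) ∧ IsDistinguishing G φ} with hS
  have hl' : listDistinguishingNumber G = sInf S := rfl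
  have hmem : Fintype.card V ∈ S := by
    intro L hL
    have hall : ∀ s : Finset V, s.card ≤ (s.biUnion L).card := by
      intro s
      rcases s.eq_empty_or_nonempty with rfl | ⟨v, hv⟩
      · simp
      · calc s.card ≤ Fintype.card V := Finset.card_le_univ s
          _ = (L v).card := (hL v).symm
          _ ≤ (s.biUnion L).card :=
            Finset.card_le_card (fun x hx => Finset.mem_biUnion.2 ⟨v, hv, hx⟩)
    obtain ⟨f, hf, hfm⟩ := (Finset.all_card_le_biUnion_card_iff_existsInjective' L).1 hall
    exact ⟨f, hfm, fun σ hσ v => hf (hσ v)⟩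
  constructor
  · intro hl m _ L hL
    have hd : d ∈ S := by
      have h0 := Nat.sInf_mem (⟨_, hmem⟩ : S.Nonempty)
      rw [hl'] at hl
      rwa [hl] at h0
    obtain ⟨φ, hφ1, hφ2⟩ := hd L (fun v => (hL v).1)
    exact ⟨φ, fun v => (hL v).2 (hφ1 v), hφ2, hφ1⟩
  · intro h
    have hdS : d ∈ S := by
      intro L hL
      set M := Finset.univ.sup (fun v => (L v).sup id) with hM
      have hsub : ∀ v, ((L v).image (· + 1)) ⊆ Finset.Icc 1 (M + d + 1) := by
        intro v x hx
        obtain ⟨y, hy, rfl⟩ := Finset.mem_image.1 hx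
        have h1 : y ≤ M :=
          le_trans (Finset.le_sup (f := id) hy) (Finset.le_sup (f := fun v => (L v).sup id) (Finset.mem_univ v))
        simp only [Finset.mem_Icc]; omega
      obtain ⟨C, hC1, hC2, hC3⟩ := h (M + d + 1) (by omega)
        (fun v => (L v).image (· + 1))
        (fun v => ⟨by
          rw [Finset.card_image_of_injective _ (fun a b hab => by omega)]
          exact hL v, hsub v⟩)
      refine ⟨fun v => C v - 1, ?_, ?_⟩
      · intro v
        obtain ⟨y, hy, hyy⟩ := Finset.mem_image.1 (hC3 v)
        show C v - 1 ∈ L v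
        have : C v - 1 = y := by omega
        rwa [this]
      · intro σ hσ v
        refine hC2 σ (fun w => ?_) v
        have h1 : 1 ≤ C w := (Finset.mem_Icc.1 (hC1 w)).1
        have h2 : 1 ≤ C (σ w) := (Finset.mem_Icc.1 (hC1 (σ w))).1
        have h3 := hσ w
        simp only at h3
        omega
    have hlb : ∀ k ∈ S, d ≤ k := by
      intro k hk
      obtain ⟨φ, hφ1, hφ2⟩ := hk (fun _ => Finset.Icc 1 k) (fun v => by simp)
      have hmemd : k ∈ {r : ℕ | ∃ ψ : V → Fin r, IsDistinguishing G ψ} := by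
        refine ⟨fun v => ⟨φ v - 1, by
          have := Finset.mem_Icc.1 (hφ1 v); omega⟩, ?_⟩
        intro σ hσ v
        refine hφ2 σ (fun w => ?_) v
        have h1 := Finset.mem_Icc.1 (hφ1 w)
        have h2 := Finset.mem_Icc.1 (hφ1 (σ w))
        have h3 := congrArg Fin.val (hσ w)
        simp only at h3
        omega
      calc d = distinguishingNumber G := hD.symm
        _ ≤ k := Nat.sInf_le hmemd
    rw [hl']
    exact le_antisymm (Nat.sInf_le hdS) (hlb _ (Nat.sInf_mem ⟨_, hdS⟩))
end

section
/- Let n ≥ 2 and d = ⌈(1+√(8n+1))/2⌉. Suppose for each i ∈ {1,…,n} we are given two d-element sets L_{2i-1}, L_{2i} of labels. Then one can choose, for each i, an unordered pair {a_i, b_i} with a_i ∈ L_{2i-1}, b_i ∈ L_{2i} (or a_i ∈ L_{2i}, b_i ∈ L_{2i-1}) and a_i ≠ b_i, such that the n pairs {a_i, b_i} are pairwise distinct. -/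
/-- Combinatorial core of `D_l(F_n) = D(F_n)`: given `d = ⌈(1+√(8n+1))/2⌉` and
two `d`-element lists `L₁ i, L₂ i` for each `i`, one can choose for each `i` a
pair of distinct labels `a i ≠ b i`, one from each list (in either order), so
that the `n` unordered pairs `{a i, b i}` are pairwise distinct. -/
theorem stmt_19 (n d : ℕ) (hn : 2 ≤ n)
    (hd : d = ⌈(1 + Real.sqrt (8 * n + 1)) / 2⌉₊)
    (L₁ L₂ : Fin n → Finset ℕ)
    (h₁ : ∀ i, (L₁ i).card = d) (h₂ : ∀ i, (L₂ i).card = d) :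
    ∃ a b : Fin n → ℕ,
      (∀ i, a i ≠ b i ∧
        ((a i ∈ L₁ i ∧ b i ∈ L₂ i) ∨ (a i ∈ L₂ i ∧ b i ∈ L₁ i))) ∧
      Function.Injective (fun i => ({a i, b i} : Finset ℕ)) := by
  classical
  -- Step 1: `2 * n ≤ d * (d - 1)`
  have hsqnn : (0:ℝ) ≤ 8 * (n:ℝ) + 1 := by positivity
  have hsq0 : (0:ℝ) ≤ Real.sqrt (8 * n + 1) := Real.sqrt_nonneg _
  have hdge : (1 + Real.sqrt (8 * n + 1)) / 2 ≤ (d : ℝ) := by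
    rw [hd]; exact Nat.le_ceil _
  have hd1 : 1 ≤ d := by
    rw [hd, Nat.one_le_iff_ne_zero, ← Nat.pos_iff_ne_zero, Nat.ceil_pos]
    linarith
  have hsq : Real.sqrt (8 * n + 1) ≤ 2 * d - 1 := by linarith
  have hsqq : (8 * (n:ℝ) + 1) = Real.sqrt (8 * n + 1) ^ 2 :=
    (Real.sq_sqrt hsqnn).symm
  have h2n : 2 * n ≤ d * (d - 1) := by
    have h2nR : (2 * n : ℝ) ≤ (d : ℝ) * ((d : ℝ) - 1) := by nlinarith
    have : ((2 * n : ℕ) : ℝ) ≤ ((d * (d - 1) : ℕ) : ℝ) := by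
      push_cast [Nat.cast_sub hd1]
      push_cast at h2nR ⊢
      linarith
    exact_mod_cast this
  -- Step 2: for each `i`, the set of admissible pairs has at least `n` elements
  set T : Fin n → Finset (Finset ℕ) := fun i =>
    (((L₁ i) ×ˢ (L₂ i)).filter (fun p => p.1 ≠ p.2)).image
      (fun p => ({p.1, p.2} : Finset ℕ)) with hT
  have hTcard : ∀ i, n ≤ (T i).card := by
    intro i
    set P := ((L₁ i) ×ˢ (L₂ i)).filter (fun p => p.1 ≠ p.2) with hP
    -- lower bound on `P.card`
    have hdiag : (((L₁ i) ×ˢ (L₂ i)).filter (fun p : ℕ × ℕ => p.1 = p.2)).card ≤ d := by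
      have : (((L₁ i) ×ˢ (L₂ i)).filter (fun p : ℕ × ℕ => p.1 = p.2)).card
          ≤ (L₁ i).card := by
        apply Finset.card_le_card_of_injOn (fun p => p.1)
        · intro p hp
          simp only [Finset.mem_coe, Finset.mem_filter, Finset.mem_product] at hp
          exact hp.1.1
        · intro p hp q hq hpq
          simp only [Finset.mem_coe, Finset.mem_filter, Finset.mem_product] at hp hq
          simp only at hpq
          exact Prod.ext hpq (by rw [← hp.2, ← hq.2, hpq])
      rwa [h₁ i] at this
    have hPcard : d * d - d ≤ P.card := by
      have hsplit : (((L₁ i) ×ˢ (L₂ i)).filter (fun p : ℕ × ℕ => p.1 = p.2)).card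
          + P.card = d * d := by
        rw [hP, Finset.card_filter_add_card_filter_not, Finset.card_product,
          h₁ i, h₂ i]
      omega
    -- each pair set has at most 2 preimages
    have hfiber : P.card ≤ 2 * (T i).card := by
      apply Finset.card_le_mul_card_image
      intro s hs
      simp only [Finset.mem_image] at hs
      obtain ⟨p, hp, hps⟩ := hs
      have : (P.filter (fun q => ({q.1, q.2} : Finset ℕ) = s))
          ⊆ {(p.1, p.2), (p.2, p.1)} := by
        intro q hq
        simp only [Finset.mem_filter] at hq
        have hqs : ({q.1, q.2} : Finset ℕ) = ({p.1, p.2} : Finset ℕ) := by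
          rw [hq.2, ← hps]
        have hq1 : q.1 ∈ ({p.1, p.2} : Finset ℕ) := by
          rw [← hqs]; simp
        have hq2 : q.2 ∈ ({p.1, p.2} : Finset ℕ) := by
          rw [← hqs]; simp
        have hqne : q.1 ≠ q.2 := by
          have := hq.1; rw [hP, Finset.mem_filter] at this; exact this.2
        simp only [Finset.mem_insert, Finset.mem_singleton] at hq1 hq2
        simp only [Finset.mem_insert, Finset.mem_singleton]
        rcases hq1 with h1 | h1 <;> rcases hq2 with h2 | h2
        · exact absurd (h1.trans h2.symm) hqne
        · left; exact Prod.ext h1 h2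
        · right; exact Prod.ext h1 h2
        · exact absurd (h1.trans h2.symm) hqne
      calc (P.filter (fun q => ({q.1, q.2} : Finset ℕ) = s)).card
          ≤ ({(p.1, p.2), (p.2, p.1)} : Finset (ℕ × ℕ)).card :=
            Finset.card_le_card this
        _ ≤ 2 := Finset.card_insert_le _ _ |>.trans (by simp)
    have : 2 * n ≤ 2 * (T i).card := by
      calc 2 * n ≤ d * (d - 1) := h2n
        _ = d * d - d := by rw [Nat.mul_sub, mul_one]
        _ ≤ P.card := hPcard
        _ ≤ 2 * (T i).card := hfiber
    omega
  -- Step 3: Hall's theorem gives an injective choice of pairs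
  have hall : ∀ s : Finset (Fin n), s.card ≤ (s.biUnion T).card := by
    intro s
    rcases s.eq_empty_or_nonempty with rfl | ⟨i, hi⟩
    · simp
    · calc s.card ≤ n := by
            simpa using Finset.card_le_card (Finset.subset_univ s)
        _ ≤ (T i).card := hTcard i
        _ ≤ (s.biUnion T).card :=
            Finset.card_le_card (fun x hx => Finset.mem_biUnion.mpr ⟨i, hi, hx⟩)
  obtain ⟨f, hfinj, hf⟩ := (Finset.all_card_le_biUnion_card_iff_exists_injective T).mp hall
  have hchoice : ∀ i, ∃ p : ℕ × ℕ, p.1 ∈ L₁ i ∧ p.2 ∈ L₂ i ∧ p.1 ≠ p.2 ∧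
      ({p.1, p.2} : Finset ℕ) = f i := by
    intro i
    have := hf i
    rw [hT] at this
    simp only [Finset.mem_image, Finset.mem_filter, Finset.mem_product] at this
    obtain ⟨p, ⟨⟨hp1, hp2⟩, hpne⟩, hps⟩ := this
    exact ⟨p, hp1, hp2, hpne, hps⟩
  choose p hp1 hp2 hpne hps using hchoice
  refine ⟨fun i => (p i).1, fun i => (p i).2, fun i => ⟨hpne i, Or.inl ⟨hp1 i, hp2 i⟩⟩, ?_⟩
  intro i j hij
  apply hfinj
  simp only at hij
  rw [← hps i, ← hps j, hij]
end
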